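/- Let φ : ℝ^n → (−∞,∞] be proper, closed, and convex, let α > 0, x, v ∈ ℝ^n, and let A₁,…,A_b with A_i ∈ ℝ^{m_i×n} be given. For i = 1,…,b let g_i : ℝ^{m_i} → (−∞,∞] be proper, closed, μ*-strongly convex on dom(g_i) (μ* > 0), and differentiable on the nonempty open set D_i := int(dom(g_i)). For ξ = (ξ₁,…,ξ_b) define z(ξ) := x − (α/b)∑_{i=1}^b A_iᵀξ_i + v and U(ξ) := ∑_{i=1}^b g_i(ξ_i) + (b/(2α))‖z(ξ)‖² − (b/α)·env_{αφ}(z(ξ)). Then U is μ*-strongly convex on the set E := ∏_{i=1}^b dom(g_i), U is differentiable on D := ∏_{i=1}^b D_i, and for every ξ ∈ D the block components of its gradient are ∇_{ξ_i} U(ξ) = ∇g_i(ξ_i) − A_i · prox_{αφ}(z(ξ)). -/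

import Mathlib

/-
With `P` the proximity operator, the envelope is `α φ (P y) + ‖y - P y‖² / 2`. Testing the
minimality of `P y` and `P w` against each other sandwiches `moreauEnv w` between two quadratics
in `w - y` with common slope `y - P y` at `y` (the lower one uses that `P` is Lipschitz, which
follows from comparing two prox points with their midpoint). Hence the envelope is differentiable
with gradient `y - P y`, and `‖·‖² / 2 - moreauEnv` is convex, having `P y` as a subgradient at `y`.
Up to the factor `b / α`, `U` is `∑ i, g i (ξ i)` plus this convex function composed with the affine
map `ξ ↦ z(ξ)`, whose linear part is minus `α / b` times the adjoint of `x ↦ (A i x)ᵢ`; convexity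
and the chain rule give both claims.
-/

open scoped RealInnerProductSpace

/-- The Moreau envelope `env_{αφ}(x) = min_{z ∈ D} (α φ z + ½‖x − z‖²)` of the proper
closed convex function with domain `D` and real values `φ` on `D`.  (Equivalently,
`α · min_z (φ z + (1/(2α))‖x − z‖²)`.) -/
noncomputable def moreauEnv {n : ℕ} (α : ℝ) (D : Set (EuclideanSpace ℝ (Fin n)))
    (φ : EuclideanSpace ℝ (Fin n) → ℝ) (x : EuclideanSpace ℝ (Fin n)) : ℝ :=
  sInf ((fun z => α * φ z + ‖x - z‖ ^ 2 / 2) '' D)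

section Gradient

variable {E F : Type*} [NormedAddCommGroup E] [InnerProductSpace ℝ E] [CompleteSpace E]
  [NormedAddCommGroup F] [InnerProductSpace ℝ F] [CompleteSpace F] {f g : E → ℝ} {p q x : E}

theorem HasGradientAt.add (hf : HasGradientAt f p x) (hg : HasGradientAt g q x) :
    HasGradientAt (fun y => f y + g y) (p + q) x := by
  rw [hasGradientAt_iff_hasFDerivAt, map_add]
  exact hf.hasFDerivAt.add hg.hasFDerivAt

theorem HasGradientAt.sub (hf : HasGradientAt f p x) (hg : HasGradientAt g q x) :
    HasGradientAt (fun y => f y - g y) (p - q) x := by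
  rw [hasGradientAt_iff_hasFDerivAt, map_sub]
  exact hf.hasFDerivAt.sub hg.hasFDerivAt

theorem HasGradientAt.const_mul (c : ℝ) (hf : HasGradientAt f p x) :
    HasGradientAt (fun y => c * f y) (c • p) x := by
  rw [hasGradientAt_iff_hasFDerivAt, map_smulₛₗ]
  exact hf.hasFDerivAt.const_mul c

theorem hasGradientAt_half_norm_sq (x : E) : HasGradientAt (fun y => ‖y‖ ^ 2 / 2) x x := by
  rw [hasGradientAt_iff_hasFDerivAt]
  refine (((hasStrictFDerivAt_norm_sq x).hasFDerivAt.mul_const (1 / 2 : ℝ)).congr_fderiv ?_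
    ).congr_of_eventuallyEq (.of_forall fun y => div_eq_mul_one_div _ _)
  ext y
  simp

theorem HasGradientAt.comp_add_clm {f : F → ℝ} {p : F}
    (c : F) (L : E →L[ℝ] F) (hf : HasGradientAt f p (c + L x)) :
    HasGradientAt (fun y => f (c + L y)) (L.adjoint p) x := by
  rw [hasGradientAt_iff_hasFDerivAt]
  have hL : HasFDerivAt (fun y => c + L y) L x := L.hasFDerivAt.const_add c
  refine (hf.hasFDerivAt.comp x hL).congr_fderiv ?_
  ext y
  simp [ContinuousLinearMap.adjoint_inner_left]

end Gradient

theorem convexOn_univ_of_le_add_inner {E : Type*} [NormedAddCommGroup E] [InnerProductSpace ℝ E]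
    {f : E → ℝ} (p : E → E) (h : ∀ y w, f y + ⟪p y, w - y⟫ ≤ f w) :
    ConvexOn ℝ Set.univ f := by
  refine ⟨convex_univ, fun a _ b _ s t hs ht hst => ?_⟩
  set c := s • a + t • b
  have hbal : s • (a - c) + t • (b - c) = 0 := by
    rw [smul_sub, smul_sub, sub_add_sub_comm, ← add_smul, hst, one_smul, sub_self]
  have hinner : s * ⟪p c, a - c⟫ + t * ⟪p c, b - c⟫ = 0 := by
    rw [← real_inner_smul_right, ← real_inner_smul_right, ← inner_add_right, hbal,
      inner_zero_right]
  have ha := mul_le_mul_of_nonneg_left (h c a) hs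
  have hb := mul_le_mul_of_nonneg_left (h c b) ht
  have hc : s * f c + t * f c = f c := by rw [← add_mul, hst, one_mul]
  rw [mul_add] at ha hb
  simp only [smul_eq_mul]
  linarith

section Prox

variable {E : Type*} [NormedAddCommGroup E] [InnerProductSpace ℝ E]

def IsProx (α : ℝ) (D : Set E) (φ : E → ℝ) (P : E → E) : Prop :=
  ∀ y, P y ∈ D ∧ ∀ u ∈ D, α * φ (P y) + ‖y - P y‖ ^ 2 / 2 ≤ α * φ u + ‖y - u‖ ^ 2 / 2

variable {α : ℝ} {D : Set E} {φ : E → ℝ} {P : E → E}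

theorem IsProx.norm_sub_sq_le_two_inner (hP : IsProx α D φ P) (hα : 0 ≤ α)
    (hφ : ConvexOn ℝ D φ) (y w : E) :
    ‖P w - P y‖ ^ 2 ≤ 2 * ⟪w - y, P w - P y⟫ := by
  set d := P w - P y
  set m := P y + (1 / 2 : ℝ) • d
  -- compare both prox points with their midpoint `m`
  have hm : m = (1 / 2 : ℝ) • P y + (1 / 2 : ℝ) • P w := by simp only [m, d]; module
  have hmD : m ∈ D := hm ▸ hφ.1 (hP y).1 (hP w).1 (by norm_num) (by norm_num) (by norm_num)
  have hφm : φ m ≤ 1 / 2 * φ (P y) + 1 / 2 * φ (P w) :=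
    hm ▸ hφ.2 (hP y).1 (hP w).1 (by norm_num) (by norm_num) (by norm_num)
  have hy : ‖y - m‖ ^ 2 = ‖y - P y‖ ^ 2 - ⟪y - P y, d⟫ + ‖d‖ ^ 2 / 4 := by
    rw [show y - m = (y - P y) - (1 / 2 : ℝ) • d by simp only [m]; abel, norm_sub_sq_real,
      real_inner_smul_right, norm_smul]
    norm_num; ring
  have hw : ‖w - m‖ ^ 2 = ‖w - P w‖ ^ 2 + ⟪w - P w, d⟫ + ‖d‖ ^ 2 / 4 := by
    rw [show w - m = (w - P w) + (1 / 2 : ℝ) • d by simp only [m, d]; module, norm_add_sq_real,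
      real_inner_smul_right, norm_smul]
    norm_num; ring
  have hd : ⟪w - P w, d⟫ - ⟪y - P y, d⟫ = ⟪w - y, d⟫ - ‖d‖ ^ 2 := by
    rw [← inner_sub_left, ← real_inner_self_eq_norm_sq, ← inner_sub_left]
    congr 1
    simp only [d]; abel
  nlinarith [(hP y).2 m hmD, (hP w).2 m hmD, mul_le_mul_of_nonneg_left hφm hα]

theorem IsProx.norm_sub_le (hP : IsProx α D φ P) (hα : 0 ≤ α) (hφ : ConvexOn ℝ D φ) (y w : E) :
    ‖P w - P y‖ ≤ 2 * ‖w - y‖ := by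
  have h := hP.norm_sub_sq_le_two_inner hα hφ y w
  nlinarith [real_inner_le_norm (w - y) (P w - P y), norm_nonneg (P w - P y),
    norm_nonneg (w - y)]

end Prox

section MoreauEnvelope

variable {n : ℕ} {α : ℝ} {D : Set (EuclideanSpace ℝ (Fin n))} {φ : EuclideanSpace ℝ (Fin n) → ℝ}
  {P : EuclideanSpace ℝ (Fin n) → EuclideanSpace ℝ (Fin n)}

theorem IsProx.moreauEnv_eq (hP : IsProx α D φ P) (y : EuclideanSpace ℝ (Fin n)) :
    moreauEnv α D φ y = α * φ (P y) + ‖y - P y‖ ^ 2 / 2 :=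
  IsLeast.csInf_eq ⟨⟨P y, (hP y).1, rfl⟩, by rintro _ ⟨u, hu, rfl⟩; exact (hP y).2 u hu⟩

theorem IsProx.moreauEnv_le (hP : IsProx α D φ P) (y w : EuclideanSpace ℝ (Fin n)) :
    moreauEnv α D φ w ≤ moreauEnv α D φ y + ⟪y - P y, w - y⟫ + ‖w - y‖ ^ 2 / 2 := by
  have hw : ‖w - P y‖ ^ 2 = ‖y - P y‖ ^ 2 + 2 * ⟪y - P y, w - y⟫ + ‖w - y‖ ^ 2 := by
    rw [show w - P y = (y - P y) + (w - y) by abel, norm_add_sq_real]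
  rw [hP.moreauEnv_eq, hP.moreauEnv_eq]
  linarith [(hP w).2 (P y) (hP y).1]

theorem IsProx.le_moreauEnv (hP : IsProx α D φ P) (hα : 0 ≤ α) (hφ : ConvexOn ℝ D φ)
    (y w : EuclideanSpace ℝ (Fin n)) :
    moreauEnv α D φ y + ⟪y - P y, w - y⟫ - 2 * ‖w - y‖ ^ 2 ≤ moreauEnv α D φ w := by
  have hy : ‖y - P w‖ ^ 2 = ‖w - P w‖ ^ 2 - 2 * ⟪w - P w, w - y⟫ + ‖w - y‖ ^ 2 := by
    rw [show y - P w = (w - P w) - (w - y) by abel, norm_sub_sq_real]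
  have hinner : ⟪w - P w, w - y⟫ = ⟪y - P y, w - y⟫ + ‖w - y‖ ^ 2 - ⟪P w - P y, w - y⟫ := by
    rw [← real_inner_self_eq_norm_sq, ← inner_add_left, ← inner_sub_left]
    congr 1; abel
  have hlip : ⟪P w - P y, w - y⟫ ≤ 2 * ‖w - y‖ ^ 2 := by
    nlinarith [real_inner_le_norm (P w - P y) (w - y), hP.norm_sub_le hα hφ y w,
      norm_nonneg (w - y)]
  rw [hP.moreauEnv_eq, hP.moreauEnv_eq]
  linarith [(hP y).2 (P w) (hP w).1, sq_nonneg ‖w - y‖]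

theorem IsProx.hasGradientAt_moreauEnv (hP : IsProx α D φ P) (hα : 0 ≤ α)
    (hφ : ConvexOn ℝ D φ) (y : EuclideanSpace ℝ (Fin n)) :
    HasGradientAt (moreauEnv α D φ) (y - P y) y := by
  rw [hasGradientAt_iff_isLittleO_nhds_zero]
  refine Asymptotics.IsBigO.trans_isLittleO (g := fun h => ‖h‖ ^ 2) ?_
    (Asymptotics.isLittleO_norm_pow_id one_lt_two)
  refine Asymptotics.IsBigO.of_bound 2 (.of_forall fun h => ?_)
  have hupper := hP.moreauEnv_le y (y + h)
  have hlower := hP.le_moreauEnv hα hφ y (y + h)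
  simp only [add_sub_cancel_left] at hupper hlower
  rw [Real.norm_eq_abs, norm_pow, norm_norm, abs_le]
  constructor <;> nlinarith [sq_nonneg ‖h‖]

theorem IsProx.hasGradientAt_half_norm_sq_sub_moreauEnv (hP : IsProx α D φ P) (hα : 0 ≤ α)
    (hφ : ConvexOn ℝ D φ) (y : EuclideanSpace ℝ (Fin n)) :
    HasGradientAt (fun z => ‖z‖ ^ 2 / 2 - moreauEnv α D φ z) (P y) y := by
  simpa using (hasGradientAt_half_norm_sq y).sub (hP.hasGradientAt_moreauEnv hα hφ y)

theorem IsProx.convexOn_half_norm_sq_sub_moreauEnv (hP : IsProx α D φ P) :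
    ConvexOn ℝ Set.univ (fun z : EuclideanSpace ℝ (Fin n) => ‖z‖ ^ 2 / 2 - moreauEnv α D φ z) := by
  refine convexOn_univ_of_le_add_inner P fun y w => ?_
  have hw : ‖w‖ ^ 2 = ‖y‖ ^ 2 + 2 * ⟪y, w - y⟫ + ‖w - y‖ ^ 2 := by
    rw [← norm_add_sq_real, add_sub_cancel]
  have hinner : ⟪y, w - y⟫ = ⟪y - P y, w - y⟫ + ⟪P y, w - y⟫ := by
    rw [← inner_add_left, sub_add_cancel]
  linarith [hP.moreauEnv_le y w]

end MoreauEnvelope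

section Blocks

variable {ι : Type*} {F : ι → Type*} [∀ i, NormedAddCommGroup (F i)]
  [∀ i, InnerProductSpace ℝ (F i)] {E : Type*} [NormedAddCommGroup E] [InnerProductSpace ℝ E]

def stackedMap (A : ∀ i, E →L[ℝ] F i) : E →L[ℝ] PiLp 2 F :=
  (PiLp.continuousLinearEquiv 2 ℝ F).symm.toContinuousLinearMap ∘L ContinuousLinearMap.pi A

@[simp]
theorem stackedMap_apply (A : ∀ i, E →L[ℝ] F i) (x : E) :
    stackedMap A x = WithLp.toLp 2 fun i => A i x :=
  rfl

variable [Fintype ι]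

theorem convexOn_sum_apply {p : ENNReal} {s : ∀ i, Set (F i)} {f : ∀ i, F i → ℝ}
    (hf : ∀ i, ConvexOn ℝ (s i) (f i)) :
    ConvexOn ℝ {ξ : PiLp p F | ∀ i, ξ i ∈ s i} (fun ξ => ∑ i, f i (ξ i)) := by
  refine ⟨fun ξ hξ η hη a b ha hb hab i => (hf i).1 (hξ i) (hη i) ha hb hab,
    fun ξ hξ η hη a b ha hb hab => ?_⟩
  simp only [PiLp.add_apply, PiLp.smul_apply, smul_eq_mul, Finset.mul_sum,
    ← Finset.sum_add_distrib]
  exact Finset.sum_le_sum fun i _ => (hf i).2 (hξ i) (hη i) ha hb hab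

variable [∀ i, CompleteSpace (F i)]

theorem hasGradientAt_sum_apply {f : ∀ i, F i → ℝ} {f' : ∀ i, F i} {ξ : PiLp 2 F}
    (hf : ∀ i, HasGradientAt (f i) (f' i) (ξ i)) :
    HasGradientAt (fun ζ : PiLp 2 F => ∑ i, f i (ζ i)) (WithLp.toLp 2 f') ξ := by
  rw [hasGradientAt_iff_hasFDerivAt]
  refine (HasFDerivAt.fun_sum fun i _ =>
    (hf i).hasFDerivAt.comp ξ (PiLp.proj (𝕜 := ℝ) 2 F i).hasFDerivAt).congr_fderiv ?_
  ext η
  simp [PiLp.inner_apply]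

theorem adjoint_stackedMap_apply [CompleteSpace E] (A : ∀ i, E →L[ℝ] F i) (ζ : PiLp 2 F) :
    (stackedMap A).adjoint ζ = ∑ i, (A i).adjoint (ζ i) := by
  refine ext_inner_left ℝ fun w => ?_
  simp [ContinuousLinearMap.adjoint_inner_right, PiLp.inner_apply, inner_sum]

end Blocks

theorem dual_objective_gradient_general (n b : ℕ) (hb : 0 < b) (α μst : ℝ) (hα : 0 < α)
    (md : Fin b → ℕ)
    (A : ∀ i : Fin b, EuclideanSpace ℝ (Fin n) →L[ℝ] EuclideanSpace ℝ (Fin (md i)))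
    (Dφ : Set (EuclideanSpace ℝ (Fin n))) (φ : EuclideanSpace ℝ (Fin n) → ℝ)
    (hφconv : ConvexOn ℝ Dφ φ)
    (P : EuclideanSpace ℝ (Fin n) → EuclideanSpace ℝ (Fin n))
    (hP : ∀ y, P y ∈ Dφ ∧ ∀ u ∈ Dφ,
      α * φ (P y) + ‖y - P y‖ ^ 2 / 2 ≤ α * φ u + ‖y - u‖ ^ 2 / 2)
    (Dg : ∀ i : Fin b, Set (EuclideanSpace ℝ (Fin (md i))))
    (g : ∀ i : Fin b, EuclideanSpace ℝ (Fin (md i)) → ℝ)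
    (g' : ∀ i : Fin b, EuclideanSpace ℝ (Fin (md i)) → EuclideanSpace ℝ (Fin (md i)))
    (hgstrong : ∀ i, ConvexOn ℝ (Dg i) (fun ξ => g i ξ - μst / 2 * ‖ξ‖ ^ 2))
    (hgdiff : ∀ i, ∀ ξ ∈ interior (Dg i), HasGradientAt (g i) (g' i ξ) ξ)
    (x v : EuclideanSpace ℝ (Fin n)) :
    ConvexOn ℝ
      {ξ : PiLp 2 (fun i : Fin b => EuclideanSpace ℝ (Fin (md i))) | ∀ i, ξ i ∈ Dg i}
      (fun ξ => (∑ i : Fin b, g i (ξ i)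
          + ((b : ℝ) / (2 * α)) *
            ‖x - ((α / (b : ℝ)) • ∑ i : Fin b, (A i).adjoint (ξ i)) + v‖ ^ 2
          - ((b : ℝ) / α) *
            moreauEnv α Dφ φ (x - ((α / (b : ℝ)) • ∑ i : Fin b, (A i).adjoint (ξ i)) + v))
        - μst / 2 * ‖ξ‖ ^ 2) ∧
    ∀ ξ : PiLp 2 (fun i : Fin b => EuclideanSpace ℝ (Fin (md i))),
      (∀ i, ξ i ∈ interior (Dg i)) →
      HasGradientAt
        (fun ζ : PiLp 2 (fun i : Fin b => EuclideanSpace ℝ (Fin (md i))) =>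
          ∑ i : Fin b, g i (ζ i)
            + ((b : ℝ) / (2 * α)) *
              ‖x - ((α / (b : ℝ)) • ∑ i : Fin b, (A i).adjoint (ζ i)) + v‖ ^ 2
            - ((b : ℝ) / α) *
              moreauEnv α Dφ φ (x - ((α / (b : ℝ)) • ∑ i : Fin b, (A i).adjoint (ζ i)) + v))
        ((WithLp.equiv 2 _).symm fun i =>
          g' i (ξ i) - A i (P (x - ((α / (b : ℝ)) • ∑ i : Fin b, (A i).adjoint (ξ i)) + v)))
        ξ := by
  have hprox : IsProx α Dφ φ P := hP
  have hb' : (b : ℝ) ≠ 0 := Nat.cast_ne_zero.mpr hb.ne'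
  set L := -((α / b) • (stackedMap A).adjoint)
  set M := fun z : EuclideanSpace ℝ (Fin n) => ‖z‖ ^ 2 / 2 - moreauEnv α Dφ φ z
  have hz : ∀ ζ, x - (α / b) • ∑ i, (A i).adjoint (ζ i) + v = (x + v) + L ζ := by
    intro ζ
    simp [L, adjoint_stackedMap_apply, sub_eq_add_neg, add_right_comm]
  have hU : ∀ ζ, ∑ i, g i (ζ i) + b / (2 * α) * ‖(x + v) + L ζ‖ ^ 2
      - b / α * moreauEnv α Dφ φ ((x + v) + L ζ)
      = ∑ i, g i (ζ i) + b / α * M ((x + v) + L ζ) := by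
    intro ζ; simp only [M]; ring
  simp only [hz, hU]
  constructor
  · have hM : ConvexOn ℝ Set.univ (fun ζ => M ((x + v) + L ζ)) :=
      (hprox.convexOn_half_norm_sq_sub_moreauEnv.translate_right (x + v)).comp_linearMap
        L.toLinearMap
    refine ((convexOn_sum_apply hgstrong).add
      ((hM.subset (Set.subset_univ _) (convexOn_sum_apply hgstrong).1).smul
        (div_nonneg b.cast_nonneg hα.le))).congr fun ξ _ => ?_
    rw [PiLp.norm_sq_eq_of_L2 _ ξ, Finset.mul_sum]
    simp only [Pi.add_apply, Finset.sum_sub_distrib, smul_eq_mul]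
    ring
  · intro ξ hξ
    convert (hasGradientAt_sum_apply fun i => hgdiff i (ξ i) (hξ i)).add
      (((hprox.hasGradientAt_half_norm_sq_sub_moreauEnv hα.le hφconv _).comp_add_clm
        (x + v) L).const_mul (b / α)) using 1
    ext i : 2
    simp [L, smul_smul, hα.ne', hb', sub_eq_add_neg]

/-- **The dual objective of the SPP subproblem is a strongly convex gradient potential.**
Let `φ` be proper, closed and convex (domain `Dφ`, values `φ`, prox `P` at scale `α > 0`),
`x, v ∈ ℝⁿ`, `A_i : ℝⁿ → ℝ^{m_i}` linear, and for `i = 1,…,b` let `g_i` be proper,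
closed, `μ*`-strongly convex on its domain `Dg i` and differentiable (gradient `g' i`) on
the nonempty open set `D_i = int (Dg i)`.  For `ξ = (ξ₁,…,ξ_b)` set
`z(ξ) := x − (α/b) ∑_i A_iᵀ ξ_i + v` and
`U(ξ) := ∑_i g_i(ξ_i) + (b/(2α))‖z(ξ)‖² − (b/α)·env_{αφ}(z(ξ))`.  Then `U` is
`μ*`-strongly convex on `E = ∏_i Dg i`, differentiable on `D = ∏_i D_i`, and for `ξ ∈ D`
the gradient blocks are `∇_{ξ_i} U(ξ) = ∇g_i(ξ_i) − A_i (prox_{αφ}(z(ξ)))`. -/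
theorem dual_objective_gradient (n b : ℕ) (hb : 0 < b) (α μst : ℝ)
    (hα : 0 < α) (hμst : 0 < μst)
    (md : Fin b → ℕ)
    (A : ∀ i : Fin b, EuclideanSpace ℝ (Fin n) →L[ℝ] EuclideanSpace ℝ (Fin (md i)))
    (Dφ : Set (EuclideanSpace ℝ (Fin n))) (φ : EuclideanSpace ℝ (Fin n) → ℝ)
    (hDφ : Dφ.Nonempty) (hφconv : ConvexOn ℝ Dφ φ)
    (hφclosed : IsClosed {q : EuclideanSpace ℝ (Fin n) × ℝ | q.1 ∈ Dφ ∧ φ q.1 ≤ q.2})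
    (P : EuclideanSpace ℝ (Fin n) → EuclideanSpace ℝ (Fin n))
    (hP : ∀ y, P y ∈ Dφ ∧ ∀ u ∈ Dφ,
      α * φ (P y) + ‖y - P y‖ ^ 2 / 2 ≤ α * φ u + ‖y - u‖ ^ 2 / 2)
    (Dg : ∀ i : Fin b, Set (EuclideanSpace ℝ (Fin (md i))))
    (g : ∀ i : Fin b, EuclideanSpace ℝ (Fin (md i)) → ℝ)
    (g' : ∀ i : Fin b, EuclideanSpace ℝ (Fin (md i)) → EuclideanSpace ℝ (Fin (md i)))
    (hDg : ∀ i, (Dg i).Nonempty)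
    (hgclosed : ∀ i,
      IsClosed {q : EuclideanSpace ℝ (Fin (md i)) × ℝ | q.1 ∈ Dg i ∧ g i q.1 ≤ q.2})
    (hgstrong : ∀ i, ConvexOn ℝ (Dg i) (fun ξ => g i ξ - μst / 2 * ‖ξ‖ ^ 2))
    (hint : ∀ i, (interior (Dg i)).Nonempty)
    (hgdiff : ∀ i, ∀ ξ ∈ interior (Dg i), HasGradientAt (g i) (g' i ξ) ξ)
    (x v : EuclideanSpace ℝ (Fin n)) :
    ConvexOn ℝ
      {ξ : PiLp 2 (fun i : Fin b => EuclideanSpace ℝ (Fin (md i))) | ∀ i, ξ i ∈ Dg i}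
      (fun ξ => (∑ i : Fin b, g i (ξ i)
          + ((b : ℝ) / (2 * α)) *
            ‖x - ((α / (b : ℝ)) • ∑ i : Fin b, (A i).adjoint (ξ i)) + v‖ ^ 2
          - ((b : ℝ) / α) *
            moreauEnv α Dφ φ (x - ((α / (b : ℝ)) • ∑ i : Fin b, (A i).adjoint (ξ i)) + v))
        - μst / 2 * ‖ξ‖ ^ 2) ∧
    ∀ ξ : PiLp 2 (fun i : Fin b => EuclideanSpace ℝ (Fin (md i))),
      (∀ i, ξ i ∈ interior (Dg i)) →
      HasGradientAt
        (fun ζ : PiLp 2 (fun i : Fin b => EuclideanSpace ℝ (Fin (md i))) =>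
          ∑ i : Fin b, g i (ζ i)
            + ((b : ℝ) / (2 * α)) *
              ‖x - ((α / (b : ℝ)) • ∑ i : Fin b, (A i).adjoint (ζ i)) + v‖ ^ 2
            - ((b : ℝ) / α) *
              moreauEnv α Dφ φ (x - ((α / (b : ℝ)) • ∑ i : Fin b, (A i).adjoint (ζ i)) + v))
        ((WithLp.equiv 2 _).symm fun i =>
          g' i (ξ i) - A i (P (x - ((α / (b : ℝ)) • ∑ i : Fin b, (A i).adjoint (ξ i)) + v)))
        ξ :=
  dual_objective_gradient_general n b hb α μst hα md A Dφ φ hφconv P hP Dg g g' hgstrong hgdiff x v
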